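/- arXiv:2601.07027 — 3 statements merged into one kernel-verified Lean document; each statement's English description precedes it below -/
import Mathlib

section
/- Let X and Y be topological spaces, f : X → Y a continuous map with dense image, and 𝒰 an open cover of Y. If φ : Y → X is a continuous map such that φ ∘ f is f⁻¹(𝒰)-close to the identity of X (i.e., for every x ∈ X there is U ∈ 𝒰 with x and φ(f(x)) both in f⁻¹(U)), then f ∘ φ is St(𝒰)-close to the identity of Y, i.e., for every y ∈ Y there is U ∈ 𝒰 such that y and f(φ(y)) both lie in the star St(U, 𝒰) = ⋃{V ∈ 𝒰 : V ∩ U ≠ ∅}. -/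
open Set

/-- Star of a set `A` with respect to a cover `𝒰`. -/
def star' {Y : Type*} (A : Set Y) (𝒰 : Set (Set Y)) : Set Y :=
  ⋃₀ {V ∈ 𝒰 | (V ∩ A).Nonempty}

theorem stmt0 {X Y : Type*} [TopologicalSpace X] [TopologicalSpace Y]
    (f : X → Y) (hf : Continuous f) (hdense : DenseRange f)
    (𝒰 : Set (Set Y)) (hopen : ∀ U ∈ 𝒰, IsOpen U) (hcov : ⋃₀ 𝒰 = univ)
    (φ : Y → X) (hφ : Continuous φ)
    (hclose : ∀ x : X, ∃ U ∈ 𝒰, x ∈ f ⁻¹' U ∧ φ (f x) ∈ f ⁻¹' U) :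
    ∀ y : Y, ∃ U ∈ 𝒰, y ∈ star' U 𝒰 ∧ f (φ y) ∈ star' U 𝒰 := by
  intro y
  -- pick V ∈ 𝒰 containing y
  have hy : y ∈ ⋃₀ 𝒰 := by rw [hcov]; trivial
  obtain ⟨V, hV, hyV⟩ := hy
  -- pick U ∈ 𝒰 containing f (φ y)
  have hy2 : f (φ y) ∈ ⋃₀ 𝒰 := by rw [hcov]; trivial
  obtain ⟨U, hU, hfφy⟩ := hy2
  -- O = V ∩ (f ∘ φ)⁻¹ U is open, nonempty
  have hOopen : IsOpen (V ∩ (fun z => f (φ z)) ⁻¹' U) :=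
    (hopen V hV).inter ((hf.comp hφ).isOpen_preimage U (hopen U hU))
  have hOne : (V ∩ (fun z => f (φ z)) ⁻¹' U).Nonempty := ⟨y, hyV, hfφy⟩
  obtain ⟨x, hzV, hzU⟩ := hdense.exists_mem_open hOopen hOne
  obtain ⟨W, hW, hxW, hφxW⟩ := hclose x
  refine ⟨W, hW, ⟨V, ⟨hV, f x, hzV, hxW⟩, hyV⟩, ⟨U, ⟨hU, f (φ (f x)), hzU, hφxW⟩, hfφy⟩⟩
end

section
/- Let G be a compact topological group acting continuously on a paracompact Hausdorff space X, and let s, h : X → ℝ be G-invariant functions with s upper semicontinuous, h lower semicontinuous, and s(x) < h(x) for all x ∈ X. Then there exists a continuous G-invariant function f : X → ℝ with s(x) < f(x) < h(x) for all x ∈ X. -/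
open Set

/-!
A continuous `f₀` with `s < f₀ < h` exists on any normal paracompact space: near each point some
constant lies strictly between `s` and `h` by semicontinuity, and a partition of unity glues these
constants into a function with values in the convex sets `Ioo (s x) (h x)`. Replacing `f₀` by its
maximum over the orbit, `x ↦ max_g f₀ (g • x)`, keeps it continuous because `G` is compact and
makes it invariant. It stays above `s` since `f₀ x` is one of the competitors, and below `h` since
the maximum is attained at some `g • x`, where `f₀ (g • x) < h (g • x) = h x`.
-/

theorem exists_continuous_mem_Ioo_of_semicontinuous {X : Type*} [TopologicalSpace X]
    [NormalSpace X] [ParacompactSpace X] {s h : X → ℝ} (hs : UpperSemicontinuous s)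
    (hh : LowerSemicontinuous h) (hsh : ∀ x, s x < h x) :
    ∃ f : C(X, ℝ), ∀ x, f x ∈ Ioo (s x) (h x) :=
  exists_continuous_forall_mem_convex_of_local_const (fun _ => convex_Ioo _ _) fun x =>
    let ⟨c, hsc, hch⟩ := exists_between (hsh x)
    ⟨c, (hs x c hsc).and (hh x c hch)⟩

section OrbitSup

variable (G : Type*) {X : Type*} [Group G] [MulAction G X]

noncomputable def orbitSup (f : X → ℝ) (x : X) : ℝ := ⨆ g : G, f (g • x)

theorem orbitSup_smul (f : X → ℝ) (g : G) (x : X) : orbitSup G f (g • x) = orbitSup G f x := by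
  simp only [orbitSup, smul_smul]
  exact (mul_right_surjective g).iSup_comp fun g' => f (g' • x)

variable [TopologicalSpace G] [CompactSpace G] [TopologicalSpace X] [ContinuousSMul G X]
  {f : X → ℝ}

theorem isCompact_range_comp_smul (hf : Continuous f) (x : X) :
    IsCompact (range fun g : G => f (g • x)) :=
  isCompact_range (hf.comp (continuous_id.smul continuous_const))

theorem continuous_orbitSup (hf : Continuous f) : Continuous (orbitSup G f) := by
  have := isCompact_univ.continuous_sSup (f := fun (x : X) (g : G) => f (g • x))
    (hf.comp (continuous_snd.smul continuous_fst))
  simp only [image_univ, sSup_range] at this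
  exact this

theorem le_orbitSup (hf : Continuous f) (x : X) : f x ≤ orbitSup G f x := by
  unfold orbitSup
  simpa only [one_smul] using le_ciSup (isCompact_range_comp_smul G hf x).bddAbove 1

theorem exists_orbitSup_eq (hf : Continuous f) (x : X) : ∃ g : G, orbitSup G f x = f (g • x) := by
  obtain ⟨g, hg⟩ := (isCompact_range_comp_smul G hf x).sSup_mem (range_nonempty _)
  exact ⟨g, hg.symm⟩

end OrbitSup

theorem stmt1_general {G X : Type*} [Group G] [TopologicalSpace G] [CompactSpace G]
    [TopologicalSpace X] [T2Space X] [ParacompactSpace X]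
    [MulAction G X] [ContinuousSMul G X]
    (s h : X → ℝ)
    (hh_inv : ∀ (g : G) (x : X), h (g • x) = h x)
    (hs : UpperSemicontinuous s) (hh : LowerSemicontinuous h)
    (hsh : ∀ x, s x < h x) :
    ∃ f : X → ℝ, Continuous f ∧ (∀ (g : G) (x : X), f (g • x) = f x) ∧
      ∀ x, s x < f x ∧ f x < h x := by
  obtain ⟨f₀, hf₀⟩ := exists_continuous_mem_Ioo_of_semicontinuous hs hh hsh
  refine ⟨orbitSup G f₀, continuous_orbitSup G f₀.continuous, orbitSup_smul G f₀,
    fun x => ⟨(hf₀ x).1.trans_le (le_orbitSup G f₀.continuous x), ?_⟩⟩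
  obtain ⟨g, hg⟩ := exists_orbitSup_eq G f₀.continuous x
  rw [hg, ← hh_inv g x]
  exact (hf₀ (g • x)).2

theorem stmt1 {G X : Type*} [Group G] [TopologicalSpace G] [CompactSpace G]
    [IsTopologicalGroup G] [TopologicalSpace X] [T2Space X] [ParacompactSpace X]
    [MulAction G X] [ContinuousSMul G X]
    (s h : X → ℝ)
    (hs_inv : ∀ (g : G) (x : X), s (g • x) = s x)
    (hh_inv : ∀ (g : G) (x : X), h (g • x) = h x)
    (hs : UpperSemicontinuous s) (hh : LowerSemicontinuous h)
    (hsh : ∀ x, s x < h x) :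
    ∃ f : X → ℝ, Continuous f ∧ (∀ (g : G) (x : X), f (g • x) = f x) ∧
      ∀ x, s x < f x ∧ f x < h x :=
  stmt1_general s h hh_inv hs hh hsh
end

section
/- Let X be a topological space with open cover 𝒰, F : X × [0,1] → X continuous with F₀ = id, and suppose γ(x) = sup{t : ∃ U ∈ 𝒰, F({x}×[0,t]) ⊆ U} > 0 for each x. If α : X → (0,1] is continuous with α(x) < γ(x) for all x, then the map F^α : X × [0,1] → X defined by F^α(x,t) = F(x, t·α(x)) is continuous and 𝒰-limited: for every x ∈ X there exists U ∈ 𝒰 with F^α(x,t) ∈ U for all t ∈ [0,1]. -/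
open Set

theorem stmt5 {X : Type*} [TopologicalSpace X]
    (F : X → ℝ → X) (hF : Continuous (fun p : X × ℝ => F p.1 p.2))
    (hF0 : ∀ x : X, F x 0 = x)
    (𝒰 : Set (Set X)) (hopen : ∀ U ∈ 𝒰, IsOpen U) (hcov : ⋃₀ 𝒰 = univ)
    (α : X → ℝ) (hαcont : Continuous α) (hα : ∀ x, 0 < α x ∧ α x ≤ 1)
    (hαγ : ∀ x : X, α x < sSup {t : ℝ | t ∈ Icc (0:ℝ) 1 ∧ ∃ U ∈ 𝒰, MapsTo (F x) (Icc 0 t) U}) :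
    Continuous (fun p : X × ℝ => F p.1 (p.2 * α p.1)) ∧
      ∀ x : X, ∃ U ∈ 𝒰, ∀ t ∈ Icc (0:ℝ) 1, F x (t * α x) ∈ U := by
  constructor
  · exact hF.comp (continuous_fst.prodMk (continuous_snd.mul (hαcont.comp continuous_fst)))
  · intro x
    set S := {t : ℝ | t ∈ Icc (0:ℝ) 1 ∧ ∃ U ∈ 𝒰, MapsTo (F x) (Icc 0 t) U} with hS
    have hne : S.Nonempty := by
      by_contra h
      rw [not_nonempty_iff_eq_empty] at h
      have : α x < sSup S := hαγ x
      rw [h, Real.sSup_empty] at this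
      linarith [(hα x).1]
    obtain ⟨t, htS, hαt⟩ := exists_lt_of_lt_csSup hne (hαγ x)
    obtain ⟨_, U, hU, hmap⟩ := htS
    refine ⟨U, hU, fun s hs => hmap ?_⟩
    constructor
    · exact mul_nonneg hs.1 (hα x).1.le
    · calc s * α x ≤ 1 * α x := by
            exact mul_le_mul_of_nonneg_right hs.2 (hα x).1.le
        _ = α x := one_mul _
        _ ≤ t := hαt.le
end
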